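/- (Kronecker product bound) For all positive integers m and n, N(mn) ≥ min{N(m), N(n)}. -/
import Mathlib


/-- A latin square of order `n`: an `n × n` array with entries from an `n`-element
symbol set such that every row and every column contains each symbol exactly once. -/
def IsLatinSquare {n : ℕ} (L : Fin n → Fin n → Fin n) : Prop :=
  (∀ i, Function.Bijective fun j => L i j) ∧ (∀ j, Function.Bijective fun i => L i j)

/-- Two latin squares of order `n` are orthogonal if the `n²` superimposed
ordered pairs of entries are all distinct. -/
def AreOrthogonal {n : ℕ} (L M : Fin n → Fin n → Fin n) : Prop :=
  Function.Injective fun p : Fin n × Fin n => (L p.1 p.2, M p.1 p.2)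

/-- There exist `r` mutually orthogonal latin squares (MOLS) of order `n`. -/
def HasMOLS (n r : ℕ) : Prop :=
  ∃ L : Fin r → Fin n → Fin n → Fin n,
    (∀ s, IsLatinSquare (L s)) ∧ ∀ s t : Fin r, s ≠ t → AreOrthogonal (L s) (L t)

/-- `molsNum n` is `N(n)`, the maximum size of a set of MOLS of order `n`. -/
noncomputable def molsNum (n : ℕ) : ℕ := sSup {r | HasMOLS n r}

lemma hasMOLS_mono {n r r' : ℕ} (h : r' ≤ r) (H : HasMOLS n r) : HasMOLS n r' := by
  obtain ⟨L, hL, hO⟩ := H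
  exact ⟨fun s => L (Fin.castLE h s), fun s => hL _,
    fun s t hst => hO _ _ (fun e => hst (Fin.castLE_injective h e))⟩

lemma hasMOLS_bound {n r : ℕ} (hn : 2 ≤ n) (H : HasMOLS n r) : r ≤ (n ^ n) ^ n := by
  obtain ⟨L, hL, hO⟩ := H
  have hinj : Function.Injective L := by
    intro s t hst
    by_contra hne
    have := hO s t hne
    rw [hst] at this
    have hinj2 : Function.Injective fun p : Fin n × Fin n => L t p.1 p.2 := by
      intro p q hpq
      exact this (by simp [hpq])
    have := Fintype.card_le_of_injective _ hinj2
    simp [Fintype.card_prod] at this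
    nlinarith
  have := Fintype.card_le_of_injective _ hinj
  simpa [Fintype.card_fun] using this

lemma hasMOLS_bddAbove {n : ℕ} (hn : 2 ≤ n) : BddAbove {r | HasMOLS n r} :=
  ⟨(n ^ n) ^ n, fun r hr => hasMOLS_bound hn hr⟩

lemma hasMOLS_zero (n : ℕ) : HasMOLS n 0 :=
  ⟨fun s => s.elim0, fun s => s.elim0, fun s => s.elim0⟩

lemma hasMOLS_kron {m n r : ℕ} (Hm : HasMOLS m r) (Hn : HasMOLS n r) :
    HasMOLS (m * n) r := by
  obtain ⟨L, hL, hLO⟩ := Hm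
  obtain ⟨M, hM, hMO⟩ := Hn
  let e : Fin m × Fin n ≃ Fin (m * n) := finProdFinEquiv
  refine ⟨fun s i j => e (L s (e.symm i).1 (e.symm j).1, M s (e.symm i).2 (e.symm j).2),
    ?_, ?_⟩
  · intro s
    constructor
    · intro i
      have : (fun j => e (L s (e.symm i).1 (e.symm j).1, M s (e.symm i).2 (e.symm j).2))
          = e ∘ (Prod.map (fun b => L s (e.symm i).1 b) (fun b => M s (e.symm i).2 b)) ∘ e.symm := by
        funext j; rfl
      rw [this]
      exact e.bijective.comp ((((hL s).1 _).prodMap ((hM s).1 _)).comp e.symm.bijective)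
    · intro j
      have : (fun i => e (L s (e.symm i).1 (e.symm j).1, M s (e.symm i).2 (e.symm j).2))
          = e ∘ (Prod.map (fun a => L s a (e.symm j).1) (fun a => M s a (e.symm j).2)) ∘ e.symm := by
        funext i; rfl
      rw [this]
      exact e.bijective.comp ((((hL s).2 _).prodMap ((hM s).2 _)).comp e.symm.bijective)
  · intro s t hst p q hpq
    simp only [Prod.mk.injEq] at hpq
    obtain ⟨h1, h2⟩ := hpq
    have h1' := e.injective h1
    have h2' := e.injective h2
    simp only [Prod.mk.injEq] at h1' h2'
    have hLeq : ((e.symm p.1).1, (e.symm p.2).1) = ((e.symm q.1).1, (e.symm q.2).1) :=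
      hLO s t hst (Prod.ext h1'.1 h2'.1)
    have hMeq : ((e.symm p.1).2, (e.symm p.2).2) = ((e.symm q.1).2, (e.symm q.2).2) :=
      hMO s t hst (Prod.ext h1'.2 h2'.2)
    simp only [Prod.mk.injEq] at hLeq hMeq
    have hp1 : e.symm p.1 = e.symm q.1 := Prod.ext hLeq.1 hMeq.1
    have hp2 : e.symm p.2 = e.symm q.2 := Prod.ext hLeq.2 hMeq.2
    exact Prod.ext (e.symm.injective hp1) (e.symm.injective hp2)


theorem kronecker_product_bound : ∀ m n : ℕ, 0 < m → 0 < n → min (molsNum m) (molsNum n) ≤ molsNum (m * n) := by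
  intro m n hm hn
  by_cases hm2 : 2 ≤ m
  · by_cases hn2 : 2 ≤ n
    · have hmem : HasMOLS m (molsNum m) :=
        Nat.sSup_mem ⟨0, by exact hasMOLS_zero m⟩ (hasMOLS_bddAbove hm2)
      have hnem : HasMOLS n (molsNum n) :=
        Nat.sSup_mem ⟨0, by exact hasMOLS_zero n⟩ (hasMOLS_bddAbove hn2)
      have hk : HasMOLS (m * n) (min (molsNum m) (molsNum n)) :=
        hasMOLS_kron (hasMOLS_mono (min_le_left _ _) hmem)
          (hasMOLS_mono (min_le_right _ _) hnem)
      exact le_csSup (hasMOLS_bddAbove (by nlinarith)) hk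
    · obtain rfl : n = 1 := by omega
      rw [mul_one]; exact min_le_left _ _
  · obtain rfl : m = 1 := by omega
    rw [one_mul]; exact min_le_right _ _
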